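/- arXiv:0908.3473 — 4 statements merged into one kernel-verified Lean document; each statement's English description precedes it below -/
import Mathlib

section
/- Let Λ ⊆ ℤ^d, let Γ ⊂ ℤ^d \ {0} be finite with a linear function strictly positive on Γ and bounded below on Λ, and let 𝔅 = Λ \ 𝔇 for a finite set 𝔇. If (𝒫, 𝒩) and (𝒫′, 𝒩′) are both partitions of 𝔅 satisfying (𝒫 + Γ) ∩ 𝔅 = 𝒩 and (𝒫′ + Γ) ∩ 𝔅 = 𝒩′, then 𝒫 = 𝒫′ and 𝒩 = 𝒩′. -/
/-!
A move subtracts some `γ ∈ Γ` and so strictly decreases the integer `ℓ`, which is bounded below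
on the board; hence "can move to" is well-founded on the board. The winning positions are exactly the positions
with no move into a winning position, and a set with this property (a kernel of the move graph)
is unique by well-founded induction: whether `q` is winning is determined by which of its
predecessors are winning.
-/

open Set

variable {α : Type*}

/-- `r p q` means that a move leads from `q` to `p`, so `P` is a kernel of the move graph on `B`. -/
def IsKernelOn (r : α → α → Prop) (B P : Set α) : Prop :=
  P ⊆ B ∧ ∀ q ∈ B, q ∈ P ↔ ∀ p ∈ P, ¬ r p q

theorem IsKernelOn.eq {r : α → α → Prop} {B P P' : Set α} (hr : B.WellFoundedOn r)
    (hP : IsKernelOn r B P) (hP' : IsKernelOn r B P') : P = P' := by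
  have hmem : ∀ q ∈ B, q ∈ P ↔ q ∈ P' := fun q hq =>
    hr.induction (P := fun q => q ∈ P ↔ q ∈ P') hq fun y hy ih => by
      rw [hP.2 y hy, hP'.2 y hy]
      refine forall_congr' fun p => ?_
      by_cases hpB : p ∈ B
      · by_cases hpy : r p y
        · simp only [ih p hpB hpy]
        · simp only [hpy, not_false_eq_true, implies_true]
      · simp only [show p ∉ P from fun h => hpB (hP.1 h),
          show p ∉ P' from fun h => hpB (hP'.1 h), false_implies]
  ext q
  exact ⟨fun h => (hmem q (hP.1 h)).1 h, fun h => (hmem q (hP'.1 h)).2 h⟩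

theorem isKernelOn_of_partition {r : α → α → Prop} {B P N : Set α}
    (hPN : P ∪ N = B) (hdisj : P ∩ N = ∅) (hN : {q | ∃ p ∈ P, r p q} ∩ B = N) :
    IsKernelOn r B P := by
  refine ⟨hPN ▸ subset_union_left, fun q hq => ⟨?_, fun h => ?_⟩⟩
  · rintro hqP p hpP hpq
    have hqN : q ∈ N := hN ▸ ⟨⟨p, hpP, hpq⟩, hq⟩
    exact (hdisj ▸ ⟨hqP, hqN⟩ : q ∈ (∅ : Set α))
  · rcases (hPN ▸ hq : q ∈ P ∪ N) with hqP | hqN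
    · exact hqP
    · obtain ⟨⟨p, hpP, hpq⟩, -⟩ := hN ▸ hqN
      exact absurd hpq (h p hpP)

theorem eq_diff_of_partition {B P N : Set α} (hPN : P ∪ N = B) (hdisj : P ∩ N = ∅) :
    N = B \ P := by
  rw [← hPN, union_sdiff_cancel_left hdisj.subset]

theorem Set.wellFoundedOn_of_lt_of_bddBelow {r : α → α → Prop} {B : Set α} (f : α → ℤ)
    (hbdd : BddBelow (f '' B)) (hf : ∀ p q, r p q → f p < f q) : B.WellFoundedOn r := by
  obtain ⟨c, hc⟩ := hbdd
  have hcB : ∀ q ∈ B, c ≤ f q := fun q hq => hc (mem_image_of_mem f hq)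
  refine Subrelation.wf (fun {p q} hpq => ?_) (measure fun q : B => (f q - c).toNat).wf
  have := hf p q hpq
  have := hcB p p.2
  change (f p - c).toNat < (f q - c).toNat
  omega

theorem winning_losing_positions_unique_general (d : ℕ) (Γ : Finset (Fin d → ℤ))
    (Λ : Set (Fin d → ℤ))
    (ℓ : (Fin d → ℤ) →ₗ[ℤ] ℤ)
    (hpos : ∀ γ ∈ Γ, 0 < ℓ γ)
    (hbdd : ∃ c : ℤ, ∀ p ∈ Λ, c ≤ ℓ p)
    (𝔇 : Set (Fin d → ℤ))
    (𝔅 : Set (Fin d → ℤ)) (h𝔅 : 𝔅 = Λ \ 𝔇)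
    (P N P' N' : Set (Fin d → ℤ))
    (hPN : P ∪ N = 𝔅) (hPNdisj : P ∩ N = ∅)
    (hP'N' : P' ∪ N' = 𝔅) (hP'N'disj : P' ∩ N' = ∅)
    (hN : {q | ∃ p ∈ P, ∃ γ ∈ Γ, q = p + γ} ∩ 𝔅 = N)
    (hN' : {q | ∃ p ∈ P', ∃ γ ∈ Γ, q = p + γ} ∩ 𝔅 = N') :
    P = P' ∧ N = N' := by
  obtain ⟨c, hc⟩ := hbdd
  have hwf : 𝔅.WellFoundedOn fun p q => ∃ γ ∈ Γ, q = p + γ := by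
    refine wellFoundedOn_of_lt_of_bddBelow ℓ ⟨c, ?_⟩ ?_
    · rintro _ ⟨q, hq, rfl⟩
      exact hc q (h𝔅 ▸ hq).1
    · rintro p _ ⟨γ, hγ, rfl⟩
      simpa using hpos γ hγ
  have hPP' : P = P' :=
    (isKernelOn_of_partition hPN hPNdisj hN).eq hwf (isKernelOn_of_partition hP'N' hP'N'disj hN')
  refine ⟨hPP', ?_⟩
  rw [eq_diff_of_partition hPN hPNdisj, eq_diff_of_partition hP'N' hP'N'disj, hPP']

/-- Uniqueness of the winning/losing partition of a game board. -/
theorem winning_losing_positions_unique (d : ℕ) (Γ : Finset (Fin d → ℤ))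
    (hΓ0 : (0 : Fin d → ℤ) ∉ Γ)
    (Λ : Set (Fin d → ℤ))
    (ℓ : (Fin d → ℤ) →ₗ[ℤ] ℤ)
    (hpos : ∀ γ ∈ Γ, 0 < ℓ γ)
    (hbdd : ∃ c : ℤ, ∀ p ∈ Λ, c ≤ ℓ p)
    (𝔇 : Set (Fin d → ℤ)) (h𝔇 : 𝔇.Finite)
    (𝔅 : Set (Fin d → ℤ)) (h𝔅 : 𝔅 = Λ \ 𝔇)
    (P N P' N' : Set (Fin d → ℤ))
    (hPN : P ∪ N = 𝔅) (hPNdisj : P ∩ N = ∅)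
    (hP'N' : P' ∪ N' = 𝔅) (hP'N'disj : P' ∩ N' = ∅)
    (hN : {q | ∃ p ∈ P, ∃ γ ∈ Γ, q = p + γ} ∩ 𝔅 = N)
    (hN' : {q | ∃ p ∈ P', ∃ γ ∈ Γ, q = p + γ} ∩ 𝔅 = N') :
    P = P' ∧ N = N' :=
  winning_losing_positions_unique_general d Γ Λ ℓ hpos hbdd 𝔇 𝔅 h𝔅 P N P' N' hPN hPNdisj hP'N'
    hP'N'disj hN hN'
end

section
/- Let Λ ⊆ ℤ^d be nonempty, let Γ ⊂ ℤ^d \ {0} be finite with a linear function strictly positive on Γ and bounded below on Λ, and let 𝔅 = Λ \ 𝔇 for a finite set 𝔇 that is a downward-closed set for the Γ-order. Then there exists a partition 𝔅 = 𝒫 ⊎ 𝒩 with (𝒫 + Γ) ∩ 𝔅 = 𝒩. -/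
/-!
Every move `p ↦ p + γ` strictly increases the linear form `ℓ`, which is bounded below on the
board, so the relation "is an option of" is well-founded. Along a well-founded relation `𝒫` can
be defined by recursion, a position lying in `𝒫` iff none of its options does (a kernel of the
option digraph); `𝒩` is the rest of the board, i.e. the positions with an option in `𝒫`.
-/

theorem WellFounded.exists_kernel {α : Type*} {r : α → α → Prop} (hr : WellFounded r) :
    ∃ P : Set α, ∀ q, q ∉ P ↔ ∃ p ∈ P, r p q := by
  refine ⟨{q | hr.fix (fun q ih => ∀ p (h : r p q), ¬ ih p h) q}, fun q => ?_⟩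
  rw [Set.mem_ofPred_eq, hr.fix_eq]
  simp only [Set.mem_ofPred_eq, not_forall, not_not]
  exact ⟨fun ⟨p, hpq, hp⟩ => ⟨p, hp, hpq⟩, fun ⟨p, hp, hpq⟩ => ⟨p, hpq, hp⟩⟩

def Move {M : Type*} [Add M] (B Γ : Set M) (p q : M) : Prop :=
  p ∈ B ∧ ∃ γ ∈ Γ, q = p + γ

theorem wellFounded_move {M : Type*} [AddZeroClass M] {B Γ : Set M} (ℓ : M →+ ℤ)
    (hpos : ∀ γ ∈ Γ, 0 < ℓ γ) {c : ℤ} (hB : ∀ p ∈ B, c ≤ ℓ p) :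
    WellFounded (Move B Γ) := by
  refine Subrelation.wf ?_ (measure fun p => (ℓ p - c).toNat).wf
  rintro p _ ⟨hp, γ, hγ, rfl⟩
  have := hB p hp
  have := hpos γ hγ
  change (ℓ p - c).toNat < (ℓ (p + γ) - c).toNat
  rw [map_add]
  omega

theorem winning_losing_positions_exist_general (d : ℕ) (Γ : Finset (Fin d → ℤ))
    (Λ : Set (Fin d → ℤ))
    (ℓ : (Fin d → ℤ) →ₗ[ℤ] ℤ)
    (hpos : ∀ γ ∈ Γ, 0 < ℓ γ)
    (hbdd : ∃ c : ℤ, ∀ p ∈ Λ, c ≤ ℓ p)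
    (𝔇 : Set (Fin d → ℤ)) :
    ∃ P N : Set (Fin d → ℤ), P ∪ N = Λ \ 𝔇 ∧ P ∩ N = ∅ ∧
      {q | ∃ p ∈ P, ∃ γ ∈ Γ, q = p + γ} ∩ (Λ \ 𝔇) = N := by
  obtain ⟨c, hc⟩ := hbdd
  obtain ⟨K, hK⟩ := (wellFounded_move (B := Λ \ 𝔇) (Γ := Γ) ℓ.toAddMonoidHom hpos
    fun p hp => hc p hp.1).exists_kernel
  refine ⟨(Λ \ 𝔇) ∩ K, (Λ \ 𝔇) \ K, Set.inter_union_sdiff _ _,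
    Set.disjoint_sdiff_inter.symm.inter_eq, ?_⟩
  ext q
  simp only [Set.mem_inter_iff, Set.mem_ofPred_eq, Set.mem_sdiff, hK q, Move]
  constructor
  · rintro ⟨⟨p, ⟨hpB, hpK⟩, hγ⟩, hq⟩
    exact ⟨hq, p, hpK, hpB, hγ⟩
  · rintro ⟨hq, p, hpK, hpB, hγ⟩
    exact ⟨⟨p, ⟨hpB, hpK⟩, hγ⟩, hq⟩

/-- Existence of the winning/losing partition of a game board. -/
theorem winning_losing_positions_exist (d : ℕ) (Γ : Finset (Fin d → ℤ))
    (hΓ0 : (0 : Fin d → ℤ) ∉ Γ)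
    (Λ : Set (Fin d → ℤ)) (hΛ : Λ.Nonempty)
    (ℓ : (Fin d → ℤ) →ₗ[ℤ] ℤ)
    (hpos : ∀ γ ∈ Γ, 0 < ℓ γ)
    (hbdd : ∃ c : ℤ, ∀ p ∈ Λ, c ≤ ℓ p)
    (𝔇 : Set (Fin d → ℤ)) (h𝔇 : 𝔇.Finite)
    (h𝔇ideal : ∀ q ∈ 𝔇, ∀ p ∈ Λ,
      q - p ∈ AddSubmonoid.closure (Γ : Set (Fin d → ℤ)) → p ∈ 𝔇) :
    ∃ P N : Set (Fin d → ℤ), P ∪ N = Λ \ 𝔇 ∧ P ∩ N = ∅ ∧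
      {q | ∃ p ∈ P, ∃ γ ∈ Γ, q = p + γ} ∩ (Λ \ 𝔇) = N :=
  winning_losing_positions_exist_general d Γ Λ ℓ hpos hbdd 𝔇
end

section
/- Let Γ₂ ⊆ (ℤ/2ℤ)^d be a finite set with 0 ∉ Γ₂. Then there exists a subset P ⊆ (ℤ/2ℤ)^d such that P + Γ₂ = (ℤ/2ℤ)^d \ P, i.e., Γ₂ sustains a pattern. -/
/-! A maximal set `P` with `(P + Γ₂) ∩ P = ∅` works. If some `x` lay neither in `P` nor in
`P + Γ₂`, then `insert x P` would still be such a set: `x + γ ≠ x` as `γ ≠ 0`, and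
`x + γ ∈ P` would put `x = (x + γ) - γ` in `P + Γ₂`, because `Γ₂` is symmetric under negation
(every element of `(ℤ/2ℤ)^d` is its own negative). -/

open Pointwise

namespace Set

variable {G : Type*} [AddGroup G]

theorem exists_maximal_disjoint_add_self (S : Set G) :
    ∃ P : Set G, Maximal (fun P => Disjoint (P + S) P) P := by
  refine zorn_subset _ fun c hc hchain => ⟨⋃₀ c, ?_, fun _ => subset_sUnion_of_mem⟩
  show Disjoint (⋃₀ c + S) (⋃₀ c)
  rw [disjoint_left]
  rintro _ ⟨p, ⟨A, hA, hpA⟩, γ, hγ, rfl⟩ ⟨B, hB, hpγB⟩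
  rcases hchain.total hA hB with hAB | hBA
  · exact disjoint_left.1 (hc hB) (add_mem_add (hAB hpA) hγ) hpγB
  · exact disjoint_left.1 (hc hA) (add_mem_add hpA hγ) (hBA hpγB)

theorem disjoint_insert_add_insert {S P : Set G} {x : G} (h0 : (0 : G) ∉ S)
    (hneg : ∀ γ ∈ S, -γ ∈ S) (hP : Disjoint (P + S) P) (hxP : x ∉ P) (hxPS : x ∉ P + S) :
    Disjoint (insert x P + S) (insert x P) := by
  rw [disjoint_left]
  rintro _ ⟨p, hp, γ, hγ, rfl⟩ hpγ
  rcases hp with rfl | hp <;> rcases hpγ with hpγ | hpγ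
  · exact h0 (add_eq_left.1 hpγ ▸ hγ)
  · exact hxPS ⟨p + γ, hpγ, -γ, hneg γ hγ, add_neg_cancel_right p γ⟩
  · exact hxPS (hpγ ▸ add_mem_add hp hγ)
  · exact disjoint_left.1 hP (add_mem_add hp hγ) hpγ

theorem add_eq_compl_of_maximal {S P : Set G} (h0 : (0 : G) ∉ S) (hneg : ∀ γ ∈ S, -γ ∈ S)
    (hP : Maximal (fun P => Disjoint (P + S) P) P) : P + S = Pᶜ := by
  refine subset_antisymm (fun _ hx => disjoint_left.1 hP.prop hx) fun x hxP => ?_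
  by_contra hxPS
  exact hxP <| hP.mem_of_prop_insert (disjoint_insert_add_insert h0 hneg hP.prop hxP hxPS)

end Set

/-- Any finite `Γ₂ ⊆ (ℤ/2)^d` with `0 ∉ Γ₂` sustains a pattern `P`:
`P + Γ₂` is exactly the complement of `P`. -/
theorem exists_sustained_pattern (d : ℕ) (Γ₂ : Finset (Fin d → ZMod 2))
    (h0 : (0 : Fin d → ZMod 2) ∉ Γ₂) :
    ∃ P : Set (Fin d → ZMod 2),
      {x | ∃ p ∈ P, ∃ γ ∈ Γ₂, x = p + γ} = Pᶜ := by
  have hneg : ∀ γ ∈ (Γ₂ : Set (Fin d → ZMod 2)), -γ ∈ (Γ₂ : Set (Fin d → ZMod 2)) :=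
    fun γ hγ => by rwa [show -γ = γ from funext fun i => ZMod.neg_eq_self_mod_two (γ i)]
  obtain ⟨P, hP⟩ := Set.exists_maximal_disjoint_add_self (Γ₂ : Set (Fin d → ZMod 2))
  refine ⟨P, Eq.trans ?_ (Set.add_eq_compl_of_maximal (by exact_mod_cast h0) hneg hP)⟩
  ext x
  simp only [Set.mem_ofPred_eq, Set.mem_add, Finset.mem_coe, eq_comm]
end

section
/- Consider the lattice game on ℕ^d with a rule set Γ, board 𝔅 = ℕ^d \ {0} (misère play: defeated positions 𝔇 = {0}). Then every position p ∈ 𝔅 has a Γ-path in ℕ^d to 0 if and only if every Γ-minimal element of 𝔅 lies in Γ. -/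
/-!
A path from a nonzero `p` to `0` starts with a move `p → q`; if `p` is `Γ`-minimal, `q` can only
be `0`, so `p ∈ Γ`. Conversely, `ℓ` drops strictly along every move and is nonnegative on `ℕ^d`,
so moves are well founded; by induction, a nonzero `p` either moves to a nonzero `q`, which
reaches `0`, or is `Γ`-minimal and moves to `0` in one step.
-/

open Relation

section Paths

variable {α : Type*} {R : α → α → Prop}

theorem reflTransGen_iff_exists_seq {a b : α} :
    ReflTransGen R a b ↔
      ∃ r : ℕ, ∃ f : ℕ → α, f 0 = a ∧ f r = b ∧ ∀ k < r, R (f k) (f (k + 1)) := by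
  constructor
  · intro h
    induction h using ReflTransGen.head_induction_on with
    | refl => exact ⟨0, fun _ => b, rfl, rfl, by simp⟩
    | head hac _ ih =>
      obtain ⟨r, f, hf0, hfr, hstep⟩ := ih
      refine ⟨r + 1, fun | 0 => _ | k + 1 => f k, rfl, hfr, ?_⟩
      rintro (_ | k) hk
      · subst hf0; exact hac
      · exact hstep k (by omega)
  · rintro ⟨r, f, rfl, rfl, hstep⟩
    induction r generalizing f with
    | zero => rfl
    | succ r ih =>
      exact .head (hstep 0 r.succ_pos)
        (ih (fun k => f (k + 1)) fun k hk => hstep (k + 1) (by omega))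

theorem forall_reflTransGen_iff_of_wellFounded (hR : WellFounded (flip R)) (z : α) :
    (∀ a ≠ z, ReflTransGen R a z) ↔ ∀ a ≠ z, (¬ ∃ b ≠ z, R a b) → R a z := by
  constructor
  · intro hpath a ha hmin
    obtain ⟨b, hab, -⟩ := (hpath a ha).cases_head.resolve_left ha
    by_cases hbz : b = z
    · exact hbz ▸ hab
    · exact absurd ⟨b, hbz, hab⟩ hmin
  · intro hmin a
    induction a using hR.induction with
    | _ a ih =>
      intro ha
      by_cases hmove : ∃ b ≠ z, R a b
      · obtain ⟨b, hbz, hab⟩ := hmove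
        exact .head hab (ih b hab hbz)
      · exact .single (hmin a ha hmove)

end Paths

def latticeMove {ι : Type*} (Γ : Set (ι → ℤ)) (p q : ι → ℕ) : Prop :=
  (fun i => (p i : ℤ) - q i) ∈ Γ

theorem wellFounded_flip_latticeMove {ι : Type*} {Γ : Set (ι → ℤ)} (ℓ : (ι → ℤ) →ₗ[ℤ] ℤ)
    (hpos : ∀ γ ∈ Γ, 0 < ℓ γ) (hnonneg : ∀ p : ι → ℕ, 0 ≤ ℓ (fun i => (p i : ℤ))) :
    WellFounded (flip (latticeMove Γ)) := by
  refine Subrelation.wf (r := InvImage (· < ·) fun p : ι → ℕ => (ℓ fun i => (p i : ℤ)).toNat)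
    (fun {q p} hpq => ?_) (InvImage.wf _ wellFounded_lt)
  have hdrop : 0 < ℓ (fun i => (p i : ℤ)) - ℓ (fun i => (q i : ℤ)) := by
    rw [← map_sub]
    exact hpos _ hpq
  have hq := hnonneg q
  show (ℓ _).toNat < (ℓ _).toNat
  omega

theorem path_to_zero_iff_minimal_mem_general (d : ℕ) (Γ : Finset (Fin d → ℤ))
    (ℓ : (Fin d → ℤ) →ₗ[ℤ] ℤ)
    (hpos : ∀ γ ∈ Γ, 0 < ℓ γ)
    (hnonneg : ∀ p : Fin d → ℕ, 0 ≤ ℓ (fun i => (p i : ℤ))) :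
    (∀ p : Fin d → ℕ, p ≠ 0 → ∃ r : ℕ, ∃ f : ℕ → (Fin d → ℕ),
        f 0 = p ∧ f r = 0 ∧
        ∀ k < r, (fun i => (f k i : ℤ) - (f (k + 1) i : ℤ)) ∈ Γ)
      ↔
    (∀ p : Fin d → ℕ, p ≠ 0 →
        (¬ ∃ q : Fin d → ℕ, q ≠ 0 ∧
            (fun i => (p i : ℤ) - (q i : ℤ)) ∈ Γ) →
        (fun i => (p i : ℤ)) ∈ Γ) := by
  have hwf : WellFounded (flip (latticeMove (Γ : Set (Fin d → ℤ)))) :=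
    wellFounded_flip_latticeMove ℓ hpos hnonneg
  simpa [reflTransGen_iff_exists_seq, latticeMove] using
    forall_reflTransGen_iff_of_wellFounded hwf 0

/-- In misère play on `ℕ^d` (board `ℕ^d \ {0}`), every position has a
`Γ`-path to `0` in `ℕ^d` iff every `Γ`-minimal element of the board lies
in `Γ`. -/
theorem path_to_zero_iff_minimal_mem (d : ℕ) (Γ : Finset (Fin d → ℤ))
    (hΓ0 : (0 : Fin d → ℤ) ∉ Γ)
    (ℓ : (Fin d → ℤ) →ₗ[ℤ] ℤ)
    (hpos : ∀ γ ∈ Γ, 0 < ℓ γ)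
    (hnonneg : ∀ p : Fin d → ℕ, 0 ≤ ℓ (fun i => (p i : ℤ))) :
    (∀ p : Fin d → ℕ, p ≠ 0 → ∃ r : ℕ, ∃ f : ℕ → (Fin d → ℕ),
        f 0 = p ∧ f r = 0 ∧
        ∀ k < r, (fun i => (f k i : ℤ) - (f (k + 1) i : ℤ)) ∈ Γ)
      ↔
    (∀ p : Fin d → ℕ, p ≠ 0 →
        (¬ ∃ q : Fin d → ℕ, q ≠ 0 ∧
            (fun i => (p i : ℤ) - (q i : ℤ)) ∈ Γ) →
        (fun i => (p i : ℤ)) ∈ Γ) :=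
  path_to_zero_iff_minimal_mem_general d Γ ℓ hpos hnonneg
end
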